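/- arXiv:1102.3074 — 9 statements merged into one kernel-verified Lean document; each statement's English description precedes it below -/
import Mathlib

section
/- For every K ≥ 1, every real l×K matrix Ũ, every real m×K matrix Ṽ, every real K×K matrix D, and every choice of left inverses Q̃⁻¹ and R̃⁻¹, the following objective identity holds: ‖X − (Q̃⁻¹·Ũ)·D·(R̃⁻¹·Ṽ)ᵀ‖²_{Q,R} = ‖X̃ − Ũ·D·Ṽᵀ‖²_F, where ‖·‖_F denotes the Frobenius norm. -/
open Matrix

/-- The (Q,R)-norm of an n×p real matrix: ‖A‖_{Q,R} = sqrt(trace(Q·A·R·Aᵀ)). -/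
noncomputable def QRnorm {n p : ℕ} (Q : Matrix (Fin n) (Fin n) ℝ)
    (R : Matrix (Fin p) (Fin p) ℝ) (A : Matrix (Fin n) (Fin p) ℝ) : ℝ :=
  Real.sqrt ((Q * A * R * Aᵀ).trace)

/-- The Frobenius norm of a matrix: ‖A‖_F = sqrt(trace(A·Aᵀ)). -/
noncomputable def frobNorm {n p : ℕ} (A : Matrix (Fin n) (Fin p) ℝ) : ℝ :=
  Real.sqrt ((A * Aᵀ).trace)

lemma trace_mul_transpose_nonneg {n p : ℕ} (A : Matrix (Fin n) (Fin p) ℝ) :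
    0 ≤ (A * Aᵀ).trace := by
  simp only [Matrix.trace, Matrix.diag, Matrix.mul_apply, Matrix.transpose_apply]
  exact Finset.sum_nonneg fun i _ => Finset.sum_nonneg fun j _ => mul_self_nonneg _

/-- Objective identity for the GMD: with Q = Q̃·Q̃ᵀ, R = R̃·R̃ᵀ, X̃ = Q̃ᵀ·X·R̃, and any
left inverses Q̃⁻¹, R̃⁻¹ of Q̃, R̃, for every K ≥ 1 and all Ũ, D, Ṽ,
‖X − (Q̃⁻¹Ũ)·D·(R̃⁻¹Ṽ)ᵀ‖²_{Q,R} = ‖X̃ − Ũ·D·Ṽᵀ‖²_F. -/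
theorem gmd_objective_identity {n p l m K : ℕ} (hK : 1 ≤ K)
    (X : Matrix (Fin n) (Fin p) ℝ)
    (Q : Matrix (Fin n) (Fin n) ℝ) (R : Matrix (Fin p) (Fin p) ℝ)
    (Qt : Matrix (Fin n) (Fin l) ℝ) (Rt : Matrix (Fin p) (Fin m) ℝ)
    (hQ : Q = Qt * Qtᵀ) (hR : R = Rt * Rtᵀ)
    (Qinv : Matrix (Fin n) (Fin l) ℝ) (Rinv : Matrix (Fin p) (Fin m) ℝ)
    (hQinv : Qinvᵀ * Qt = 1) (hRinv : Rinvᵀ * Rt = 1)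
    (Ut : Matrix (Fin l) (Fin K) ℝ) (Vt : Matrix (Fin m) (Fin K) ℝ)
    (D : Matrix (Fin K) (Fin K) ℝ) :
    QRnorm Q R (X - (Qinv * Ut) * D * (Rinv * Vt)ᵀ) ^ 2 =
      frobNorm (Qtᵀ * X * Rt - Ut * D * Vtᵀ) ^ 2 := by
  set A := X - (Qinv * Ut) * D * (Rinv * Vt)ᵀ with hA
  have hQtQinv : Qtᵀ * Qinv = 1 := by
    have := congrArg Matrix.transpose hQinv
    simpa using this
  have hRtRinv : Rtᵀ * Rinv = 1 := by
    have := congrArg Matrix.transpose hRinv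
    simpa using this
  have key : Qtᵀ * A * Rt = Qtᵀ * X * Rt - Ut * D * Vtᵀ := by
    rw [hA]
    rw [Matrix.mul_sub, Matrix.sub_mul]
    congr 1
    rw [Matrix.transpose_mul]
    calc Qtᵀ * (Qinv * Ut * D * (Vtᵀ * Rinvᵀ)) * Rt
        = (Qtᵀ * Qinv) * (Ut * D) * (Vtᵀ * (Rinvᵀ * Rt)) := by
          simp only [Matrix.mul_assoc]
      _ = Ut * D * Vtᵀ := by rw [hQtQinv, hRinv, Matrix.mul_one, Matrix.one_mul]
  have htr : (Q * A * R * Aᵀ).trace = ((Qtᵀ * A * Rt) * (Qtᵀ * A * Rt)ᵀ).trace := by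
    rw [hQ, hR]
    simp only [Matrix.transpose_mul, Matrix.transpose_transpose]
    rw [show Qt * Qtᵀ * A * (Rt * Rtᵀ) * Aᵀ = Qt * ((Qtᵀ * A * Rt) * (Rtᵀ * Aᵀ)) by
      simp only [Matrix.mul_assoc]]
    rw [Matrix.trace_mul_comm]
    simp only [Matrix.mul_assoc]
  rw [QRnorm, frobNorm, htr, key,
    Real.sq_sqrt (trace_mul_transpose_nonneg _)]
end

section
/- Suppose Ũ is a real l×k matrix with Ũᵀ·Ũ = I_k, Ṽ is a real m×k matrix with Ṽᵀ·Ṽ = I_k, D̃ is a k×k diagonal matrix, and X̃ = Ũ·D̃·Ṽᵀ exactly. Then: (i) the rank-k GMD solution has zero reconstruction error in the (Q,R)-norm, i.e. ‖X − (Q̃⁻¹·Ũ)·D̃·(R̃⁻¹·Ṽ)ᵀ‖_{Q,R} = 0; and (ii) if in addition Q and R are positive definite (so l = n and m = p and Q̃, R̃ are square invertible), then X = (Q̃⁻¹·Ũ)·D̃·(R̃⁻¹·Ṽ)ᵀ, i.e. the GMD is an exact matrix decomposition of X. -/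
open Matrix

/-- If X̃ = Q̃ᵀ·X·R̃ decomposes exactly as Ũ·D̃·Ṽᵀ with orthonormal Ũ, Ṽ and
diagonal D̃, then (i) the GMD solution has zero reconstruction error in the
(Q,R)-norm; and (ii) if moreover Q and R are positive definite, then
X = (Q̃⁻¹·Ũ)·D̃·(R̃⁻¹·Ṽ)ᵀ exactly. -/
theorem gmd_zero_reconstruction_error {n p l m k : ℕ}
    (X : Matrix (Fin n) (Fin p) ℝ)
    (Q : Matrix (Fin n) (Fin n) ℝ) (R : Matrix (Fin p) (Fin p) ℝ)
    (Qt : Matrix (Fin n) (Fin l) ℝ) (Rt : Matrix (Fin p) (Fin m) ℝ)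
    (hQ : Q = Qt * Qtᵀ) (hR : R = Rt * Rtᵀ)
    (Qinv : Matrix (Fin n) (Fin l) ℝ) (Rinv : Matrix (Fin p) (Fin m) ℝ)
    (hQinv : Qinvᵀ * Qt = 1) (hRinv : Rinvᵀ * Rt = 1)
    (Ut : Matrix (Fin l) (Fin k) ℝ) (Vt : Matrix (Fin m) (Fin k) ℝ)
    (Dt : Matrix (Fin k) (Fin k) ℝ)
    (hUt : Utᵀ * Ut = 1) (hVt : Vtᵀ * Vt = 1) (hDt : Dt.IsDiag)
    (hSVD : Qtᵀ * X * Rt = Ut * Dt * Vtᵀ) :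
    QRnorm Q R (X - (Qinv * Ut) * Dt * (Rinv * Vt)ᵀ) = 0 ∧
    (Q.PosDef → R.PosDef → X = (Qinv * Ut) * Dt * (Rinv * Vt)ᵀ) := by
  set E := X - (Qinv * Ut) * Dt * (Rinv * Vt)ᵀ with hEdef
  have hQtQinv : Qtᵀ * Qinv = 1 := by
    have := congrArg Matrix.transpose hQinv
    simpa [Matrix.transpose_mul] using this
  have hRtRinv : Rtᵀ * Rinv = 1 := by
    have := congrArg Matrix.transpose hRinv
    simpa [Matrix.transpose_mul] using this
  have hmid : Qtᵀ * ((Qinv * Ut) * Dt * (Rinv * Vt)ᵀ) * Rt = Ut * Dt * Vtᵀ := by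
    have : Qtᵀ * ((Qinv * Ut) * Dt * (Rinv * Vt)ᵀ) * Rt
        = (Qtᵀ * Qinv) * Ut * Dt * Vtᵀ * (Rinvᵀ * Rt) := by
      simp only [Matrix.transpose_mul, Matrix.mul_assoc]
    rw [this, hQtQinv, hRinv, Matrix.one_mul, Matrix.mul_one]
  have hE : Qtᵀ * E * Rt = 0 := by
    rw [hEdef, Matrix.mul_sub, Matrix.sub_mul, hmid, hSVD, sub_self]
  have hQER : Q * E * R = 0 := by
    have : Q * E * R = Qt * (Qtᵀ * E * Rt) * Rtᵀ := by
      rw [hQ, hR]; simp only [Matrix.mul_assoc]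
    rw [this, hE, Matrix.mul_zero, Matrix.zero_mul]
  constructor
  · have : Q * E * R * Eᵀ = 0 := by rw [hQER, Matrix.zero_mul]
    simp [QRnorm, this]
  · intro hQpd hRpd
    have hQu : IsUnit Q.det := isUnit_iff_ne_zero.mpr hQpd.det_pos.ne'
    have hRu : IsUnit R.det := isUnit_iff_ne_zero.mpr hRpd.det_pos.ne'
    have h1 : E * R = 0 := by
      have h2 : Q * (E * R) = 0 := by rw [← Matrix.mul_assoc]; exact hQER
      calc E * R = Q⁻¹ * (Q * (E * R)) :=
            (Matrix.nonsing_inv_mul_cancel_left Q _ hQu).symm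
        _ = 0 := by rw [h2, Matrix.mul_zero]
    have hE0 : E = 0 := by
      calc E = E * R * R⁻¹ := (Matrix.mul_nonsing_inv_cancel_right R E hRu).symm
        _ = 0 := by rw [h1, Matrix.zero_mul]
    have := sub_eq_zero.mp hE0
    exact this
end

section
/- Let ṽ ∈ ℝ^m be a vector with X̃·ṽ ≠ 0, and set v := R̃⁻¹·ṽ ∈ ℝ^p. Then the GMD power-method update for the left factor agrees with the SVD power-method update for X̃: ‖X·R·v‖_Q = ‖X̃·ṽ‖₂ > 0, and Q̃ᵀ·( X·R·v / ‖X·R·v‖_Q ) = X̃·ṽ / ‖X̃·ṽ‖₂. -/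
open Matrix

/-- The Q-norm of a vector: ‖u‖_Q = sqrt(uᵀ·Q·u). -/
noncomputable def vecQnorm {n : ℕ} (Q : Matrix (Fin n) (Fin n) ℝ) (u : Fin n → ℝ) : ℝ :=
  Real.sqrt (u ⬝ᵥ Q.mulVec u)

/-- The Euclidean norm of a vector. -/
noncomputable def euclNorm {n : ℕ} (u : Fin n → ℝ) : ℝ :=
  Real.sqrt (u ⬝ᵥ u)

lemma qnorm_eq {n l : ℕ} (Qt : Matrix (Fin n) (Fin l) ℝ) (u : Fin n → ℝ) :
    vecQnorm (Qt * Qtᵀ) u = euclNorm (Qtᵀ.mulVec u) := by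
  unfold vecQnorm euclNorm
  congr 1
  rw [← mulVec_mulVec, dotProduct_mulVec, ← mulVec_transpose]

/-- The GMD power-method update for the left factor agrees with the SVD
power-method update for X̃ = Q̃ᵀ·X·R̃: for v = R̃⁻¹·ṽ with X̃·ṽ ≠ 0,
‖X·R·v‖_Q = ‖X̃·ṽ‖₂ > 0 and Q̃ᵀ·(X·R·v / ‖X·R·v‖_Q) = X̃·ṽ / ‖X̃·ṽ‖₂. -/
theorem gmd_power_method_left_update {n p l m : ℕ}
    (X : Matrix (Fin n) (Fin p) ℝ)
    (Q : Matrix (Fin n) (Fin n) ℝ) (R : Matrix (Fin p) (Fin p) ℝ)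
    (Qt : Matrix (Fin n) (Fin l) ℝ) (Rt : Matrix (Fin p) (Fin m) ℝ)
    (hQ : Q = Qt * Qtᵀ) (hR : R = Rt * Rtᵀ)
    (Rinv : Matrix (Fin p) (Fin m) ℝ) (hRinv : Rinvᵀ * Rt = 1)
    (vt : Fin m → ℝ) (hvt : (Qtᵀ * X * Rt).mulVec vt ≠ 0) :
    0 < euclNorm ((Qtᵀ * X * Rt).mulVec vt) ∧
    vecQnorm Q (X.mulVec (R.mulVec (Rinv.mulVec vt))) =
      euclNorm ((Qtᵀ * X * Rt).mulVec vt) ∧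
    Qtᵀ.mulVec ((vecQnorm Q (X.mulVec (R.mulVec (Rinv.mulVec vt))))⁻¹ •
        X.mulVec (R.mulVec (Rinv.mulVec vt))) =
      (euclNorm ((Qtᵀ * X * Rt).mulVec vt))⁻¹ • (Qtᵀ * X * Rt).mulVec vt := by
  have hkey : R.mulVec (Rinv.mulVec vt) = Rt.mulVec vt := by
    have h1 : Rtᵀ * Rinv = (Rinvᵀ * Rt)ᵀ := by simp [transpose_mul]
    rw [hR, mulVec_mulVec, Matrix.mul_assoc, h1, hRinv, transpose_one, Matrix.mul_one]
  have hX : (Qtᵀ * X * Rt).mulVec vt = Qtᵀ.mulVec (X.mulVec (Rt.mulVec vt)) := by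
    simp [mulVec_mulVec, Matrix.mul_assoc]
  have hnorm : vecQnorm Q (X.mulVec (R.mulVec (Rinv.mulVec vt))) =
      euclNorm ((Qtᵀ * X * Rt).mulVec vt) := by
    rw [hkey, hQ, qnorm_eq, hX]
  have hpos : 0 < euclNorm ((Qtᵀ * X * Rt).mulVec vt) := by
    unfold euclNorm
    have h := dotProduct_self_eq_zero (v := (Qtᵀ * X * Rt).mulVec vt)
    have hnn : 0 ≤ (Qtᵀ * X * Rt).mulVec vt ⬝ᵥ (Qtᵀ * X * Rt).mulVec vt :=
      Finset.sum_nonneg fun i _ => mul_self_nonneg _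
    have : (Qtᵀ * X * Rt).mulVec vt ⬝ᵥ (Qtᵀ * X * Rt).mulVec vt ≠ 0 := fun hz =>
      hvt (h.mp hz)
    exact Real.sqrt_pos.mpr (lt_of_le_of_ne hnn (Ne.symm this))
  refine ⟨hpos, hnorm, ?_⟩
  rw [hnorm, hkey, mulVec_smul, ← hX]
end

section
/- Let ũ ∈ ℝ^l be a vector with X̃ᵀ·ũ ≠ 0, and set u := Q̃⁻¹·ũ ∈ ℝⁿ. Then the GMD power-method update for the right factor agrees with the SVD power-method update for X̃: ‖Xᵀ·Q·u‖_R = ‖X̃ᵀ·ũ‖₂ > 0, and R̃ᵀ·( Xᵀ·Q·u / ‖Xᵀ·Q·u‖_R ) = X̃ᵀ·ũ / ‖X̃ᵀ·ũ‖₂. -/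
open Matrix

/-- The R-norm of a vector: ‖v‖_R = sqrt(vᵀ·R·v). -/
noncomputable def vecRnorm {p : ℕ} (R : Matrix (Fin p) (Fin p) ℝ) (v : Fin p → ℝ) : ℝ :=
  Real.sqrt (v ⬝ᵥ R.mulVec v)

/-- The GMD power-method update for the right factor agrees with the SVD
power-method update for X̃ = Q̃ᵀ·X·R̃: for u = Q̃⁻¹·ũ with X̃ᵀ·ũ ≠ 0,
‖Xᵀ·Q·u‖_R = ‖X̃ᵀ·ũ‖₂ > 0 and R̃ᵀ·(Xᵀ·Q·u / ‖Xᵀ·Q·u‖_R) = X̃ᵀ·ũ / ‖X̃ᵀ·ũ‖₂. -/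
theorem gmd_power_method_right_update {n p l m : ℕ}
    (X : Matrix (Fin n) (Fin p) ℝ)
    (Q : Matrix (Fin n) (Fin n) ℝ) (R : Matrix (Fin p) (Fin p) ℝ)
    (Qt : Matrix (Fin n) (Fin l) ℝ) (Rt : Matrix (Fin p) (Fin m) ℝ)
    (hQ : Q = Qt * Qtᵀ) (hR : R = Rt * Rtᵀ)
    (Qinv : Matrix (Fin n) (Fin l) ℝ) (hQinv : Qinvᵀ * Qt = 1)
    (ut : Fin l → ℝ) (hut : (Qtᵀ * X * Rt)ᵀ.mulVec ut ≠ 0) :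
    0 < euclNorm ((Qtᵀ * X * Rt)ᵀ.mulVec ut) ∧
    vecRnorm R (Xᵀ.mulVec (Q.mulVec (Qinv.mulVec ut))) =
      euclNorm ((Qtᵀ * X * Rt)ᵀ.mulVec ut) ∧
    Rtᵀ.mulVec ((vecRnorm R (Xᵀ.mulVec (Q.mulVec (Qinv.mulVec ut))))⁻¹ •
        Xᵀ.mulVec (Q.mulVec (Qinv.mulVec ut))) =
      (euclNorm ((Qtᵀ * X * Rt)ᵀ.mulVec ut))⁻¹ • (Qtᵀ * X * Rt)ᵀ.mulVec ut := by
  have hQtQinv : Qtᵀ * Qinv = 1 := by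
    have := congrArg Matrix.transpose hQinv
    simpa [Matrix.transpose_mul] using this
  have key : Xᵀ.mulVec (Q.mulVec (Qinv.mulVec ut)) = Xᵀ.mulVec (Qt.mulVec ut) := by
    have : Q.mulVec (Qinv.mulVec ut) = Qt.mulVec ut := by
      rw [hQ]
      simp [Matrix.mulVec_mulVec, Matrix.mul_assoc, hQtQinv]
    rw [this]
  set w : Fin p → ℝ := Xᵀ.mulVec (Qt.mulVec ut) with hw
  have hv : (Qtᵀ * X * Rt)ᵀ.mulVec ut = Rtᵀ.mulVec w := by
    simp [hw, Matrix.transpose_mul, Matrix.mulVec_mulVec, Matrix.mul_assoc]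
  have hnorm : vecRnorm R w = euclNorm (Rtᵀ.mulVec w) := by
    unfold vecRnorm euclNorm
    congr 1
    rw [hR, ← Matrix.mulVec_mulVec, Matrix.dotProduct_mulVec w Rt,
      Matrix.mulVec_transpose]
  have hvne : Rtᵀ.mulVec w ≠ 0 := by rw [← hv]; exact hut
  have hdp : 0 < (Rtᵀ.mulVec w) ⬝ᵥ (Rtᵀ.mulVec w) := by
    have h := dotProduct_self_eq_zero (v := Rtᵀ.mulVec w)
    have hne : (Rtᵀ.mulVec w) ⬝ᵥ (Rtᵀ.mulVec w) ≠ 0 := fun hc => hvne (h.mp hc)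
    exact lt_of_le_of_ne (Finset.sum_nonneg fun i _ => mul_self_nonneg _) (Ne.symm hne)
  have hpos : 0 < euclNorm (Rtᵀ.mulVec w) := Real.sqrt_pos.mpr hdp
  refine ⟨by rw [hv]; exact hpos, by rw [key, hv, hnorm], ?_⟩
  rw [key, hv, hnorm, Matrix.mulVec_smul]
end

section
/- For any ṽ, ṽ' ∈ ℝ^m, the vectors v := R̃⁻¹·ṽ and v' := R̃⁻¹·ṽ' satisfy the objective identity vᵀ·R·Xᵀ·Q·X·R·v = ṽᵀ·X̃ᵀ·X̃·ṽ and the constraint identity vᵀ·R·v' = ṽᵀ·ṽ'. Consequently, if ṽ* maximizes ṽᵀ·X̃ᵀ·X̃·ṽ over all ṽ ∈ ℝ^m satisfying ṽᵀ·ṽ = 1 and ṽᵀ·ṽ_j = 0 for given vectors ṽ_1, …, ṽ_{k−1} ∈ ℝ^m, then v* := R̃⁻¹·ṽ* maximizes vᵀ·R·Xᵀ·Q·X·R·v over all v ∈ ℝᵖ satisfying vᵀ·R·v = 1 and vᵀ·R·(R̃⁻¹·ṽ_j) = 0 for j = 1, …, k−1; i.e., the k-th Generalized principal component loading is given by the k-th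 right GMD factor. -/
open Matrix

lemma dot_rt (p m : ℕ) (A : Matrix (Fin p) (Fin m) ℝ) (v : Fin p → ℝ) (w : Fin m → ℝ) :
    v ⬝ᵥ A.mulVec w = (Aᵀ.mulVec v) ⬝ᵥ w := by
  rw [Matrix.dotProduct_mulVec, ← Matrix.mulVec_transpose]

/-- Generalized PCA via the GMD: for v = R̃⁻¹·ṽ the GPCA objective and constraints
transform to those of ordinary PCA of X̃ = Q̃ᵀ·X·R̃, namely
vᵀ·R·Xᵀ·Q·X·R·v = ṽᵀ·X̃ᵀ·X̃·ṽ and vᵀ·R·v' = ṽᵀ·ṽ'.  Consequently, if ṽ*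
maximizes the PCA objective of X̃ subject to unit norm and orthogonality to
given ṽ₁, …, ṽ_{K}, then v* = R̃⁻¹·ṽ* solves the k-th Generalized PCA problem,
i.e. the k-th GPC loading is the k-th right GMD factor. -/
theorem gpca_from_gmd {n p l m : ℕ}
    (X : Matrix (Fin n) (Fin p) ℝ)
    (Q : Matrix (Fin n) (Fin n) ℝ) (R : Matrix (Fin p) (Fin p) ℝ)
    (Qt : Matrix (Fin n) (Fin l) ℝ) (Rt : Matrix (Fin p) (Fin m) ℝ)
    (hQ : Q = Qt * Qtᵀ) (hR : R = Rt * Rtᵀ)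
    (Rinv : Matrix (Fin p) (Fin m) ℝ) (hRinv : Rinvᵀ * Rt = 1)
    (K : ℕ) (prev : Fin K → (Fin m → ℝ))
    (vts : Fin m → ℝ)
    (hvts1 : vts ⬝ᵥ vts = 1) (hvts2 : ∀ j, vts ⬝ᵥ prev j = 0)
    (hmax : ∀ vt : Fin m → ℝ, vt ⬝ᵥ vt = 1 → (∀ j, vt ⬝ᵥ prev j = 0) →
      vt ⬝ᵥ ((Qtᵀ * X * Rt)ᵀ * (Qtᵀ * X * Rt)).mulVec vt ≤
        vts ⬝ᵥ ((Qtᵀ * X * Rt)ᵀ * (Qtᵀ * X * Rt)).mulVec vts) :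
    (∀ vt : Fin m → ℝ,
      (Rinv.mulVec vt) ⬝ᵥ (R * Xᵀ * Q * X * R).mulVec (Rinv.mulVec vt) =
        vt ⬝ᵥ ((Qtᵀ * X * Rt)ᵀ * (Qtᵀ * X * Rt)).mulVec vt) ∧
    (∀ vt vt' : Fin m → ℝ,
      (Rinv.mulVec vt) ⬝ᵥ R.mulVec (Rinv.mulVec vt') = vt ⬝ᵥ vt') ∧
    ((Rinv.mulVec vts) ⬝ᵥ R.mulVec (Rinv.mulVec vts) = 1 ∧
      (∀ j, (Rinv.mulVec vts) ⬝ᵥ R.mulVec (Rinv.mulVec (prev j)) = 0) ∧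
      ∀ v : Fin p → ℝ, v ⬝ᵥ R.mulVec v = 1 →
        (∀ j, v ⬝ᵥ R.mulVec (Rinv.mulVec (prev j)) = 0) →
        v ⬝ᵥ (R * Xᵀ * Q * X * R).mulVec v ≤
          (Rinv.mulVec vts) ⬝ᵥ (R * Xᵀ * Q * X * R).mulVec (Rinv.mulVec vts)) := by
  have hRtRinv : Rtᵀ * Rinv = 1 := by
    have := congrArg Matrix.transpose hRinv
    simpa using this
  -- Rtᵀ (Rinv vt) = vt
  have hinv : ∀ vt : Fin m → ℝ, Rtᵀ.mulVec (Rinv.mulVec vt) = vt := by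
    intro vt
    rw [Matrix.mulVec_mulVec, hRtRinv, Matrix.one_mulVec]
  set M := (Qtᵀ * X * Rt)ᵀ * (Qtᵀ * X * Rt) with hM
  -- big matrix factorization
  have hbig : R * Xᵀ * Q * X * R = Rt * M * Rtᵀ := by
    rw [hQ, hR, hM]
    simp only [Matrix.transpose_mul, Matrix.transpose_transpose]
    simp only [Matrix.mul_assoc]
  -- objective identity for any v
  have hobj : ∀ v : Fin p → ℝ,
      v ⬝ᵥ (R * Xᵀ * Q * X * R).mulVec v =
        (Rtᵀ.mulVec v) ⬝ᵥ M.mulVec (Rtᵀ.mulVec v) := by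
    intro v
    rw [hbig, ← Matrix.mulVec_mulVec, ← Matrix.mulVec_mulVec, dot_rt, Matrix.mulVec_mulVec]
  -- constraint identity for any v, v'
  have hcon : ∀ v v' : Fin p → ℝ,
      v ⬝ᵥ R.mulVec v' = (Rtᵀ.mulVec v) ⬝ᵥ (Rtᵀ.mulVec v') := by
    intro v v'
    rw [hR, ← Matrix.mulVec_mulVec, dot_rt]
  refine ⟨?_, ?_, ?_, ?_, ?_⟩
  · intro vt; rw [hobj, hinv]
  · intro vt vt'; rw [hcon, hinv, hinv]
  · rw [hcon, hinv, hvts1]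
  · intro j; rw [hcon, hinv, hinv, hvts2]
  · intro v hv1 hv2
    rw [hobj, hobj, hinv]
    exact hmax _ (by rw [← hcon]; exact hv1)
      (fun j => by have := hv2 j; rw [hcon, hinv] at this; exact this)
end

section
/- Let R be a real p×p positive semidefinite symmetric matrix, λ ≥ 0, y ∈ ℝᵖ, and let P : ℝᵖ → ℝ be convex and homogeneous of order one (P(c·x) = c·P(x) for all c > 0 and all x ∈ ℝᵖ). Suppose v̂ ∈ ℝᵖ minimizes the penalized regression objective f(v) := (1/2)·(y − v)ᵀ·R·(y − v) + λ·P(v) over ℝᵖ. Then: (i) if v̂ᵀ·R·v̂ > 0, the vector v* := v̂ / sqrt(v̂ᵀ·R·v̂) maximizes g(v) := yᵀ·R·v − λ·P(v) over the set {v ∈ ℝᵖ : vᵀ·R·v ≤ 1}; and (ii) if v̂ = 0, then v* = 0 maximizes g over {v ∈ ℝᵖ : vᵀ·R·v ≤ 1}. -/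
/-!
Write `g v = yᵀRv - λP(v)` and `Q v = vᵀRv`. Expanding the quadratic, `v̂` minimizes the
regression objective iff it maximizes `g - Q/2`. As `g` is homogeneous of degree one and `Q` of
degree two, restricting to the ray `{t • v̂ : t > 0}` and applying Fermat's rule at `t = 1` gives
`g v̂ = Q v̂`, so the maximum value is `Q v̂ / 2`. Comparing with `t • v` for `Q v ≤ 1` gives
`t g(v) ≤ (Q v̂ + t²)/2` for all `t > 0`, hence `g v ≤ √(Q v̂)`, the value of `g` at `v̂ / √(Q v̂)`.
-/

open Matrix Set

def PosHomogeneous {E : Type*} [SMul ℝ E] (g : E → ℝ) (k : ℕ) : Prop :=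
  ∀ c : ℝ, 0 < c → ∀ x, g (c • x) = c ^ k * g x

theorem PosHomogeneous.apply_zero {E : Type*} [Zero E] [SMulZeroClass ℝ E] {g : E → ℝ} {k : ℕ}
    (hg : PosHomogeneous g k) (hk : k ≠ 0) : g 0 = 0 := by
  have h2 := hg 2 two_pos 0
  rw [smul_zero] at h2
  have : (1 : ℝ) < 2 ^ k := one_lt_pow₀ one_lt_two hk
  nlinarith

theorem eq_of_forall_pos_mul_sub_sq_le {a b : ℝ}
    (h : ∀ t : ℝ, 0 < t → a * t - b * t ^ 2 / 2 ≤ a - b / 2) : a = b := by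
  have hmax : IsLocalMax (fun t : ℝ => a * t - b * t ^ 2 / 2) 1 :=
    Filter.mem_of_superset (Ioi_mem_nhds one_pos) fun t ht => by
      simpa only [mem_ofPred_eq, mul_one, one_pow] using h t ht
  have hderiv : HasDerivAt (fun t : ℝ => a * t - b * t ^ 2 / 2) (a - b) 1 := by
    have := ((hasDerivAt_id' (1 : ℝ)).const_mul a).sub
      (((hasDerivAt_pow 2 (1 : ℝ)).const_mul b).div_const 2)
    norm_num at this
    exact this
  linarith [hmax.hasDerivAt_eq_zero hderiv]

theorem le_of_forall_pos_mul_le_sq_add_sq {a s : ℝ} (hs : 0 ≤ s)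
    (h : ∀ t : ℝ, 0 < t → t * a ≤ (s ^ 2 + t ^ 2) / 2) : a ≤ s := by
  by_contra! hsa
  nlinarith [h a (hs.trans_lt hsa)]

section MaxSubHalf

variable {E : Type*} [AddCommMonoid E] [Module ℝ E] {g Q : E → ℝ} {w : E}

theorem PosHomogeneous.apply_eq_of_isMaxOn_sub_half (hg : PosHomogeneous g 1)
    (hQ : PosHomogeneous Q 2) (hmax : IsMaxOn (fun v => g v - Q v / 2) univ w) : g w = Q w := by
  refine eq_of_forall_pos_mul_sub_sq_le fun t ht => ?_
  have := isMaxOn_univ_iff.mp hmax (t • w)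
  simp only [hg t ht, hQ t ht] at this
  linarith

theorem PosHomogeneous.nonneg_of_isMaxOn_sub_half (hg : PosHomogeneous g 1)
    (hQ : PosHomogeneous Q 2) (hmax : IsMaxOn (fun v => g v - Q v / 2) univ w) : 0 ≤ Q w := by
  have := isMaxOn_univ_iff.mp hmax 0
  simp only [hg.apply_zero one_ne_zero, hQ.apply_zero two_ne_zero,
    hg.apply_eq_of_isMaxOn_sub_half hQ hmax] at this
  linarith

theorem PosHomogeneous.le_sqrt_of_isMaxOn_sub_half (hg : PosHomogeneous g 1)
    (hQ : PosHomogeneous Q 2) (hmax : IsMaxOn (fun v => g v - Q v / 2) univ w) {v : E}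
    (hv : Q v ≤ 1) : g v ≤ √(Q w) := by
  refine le_of_forall_pos_mul_le_sq_add_sq (Real.sqrt_nonneg _) fun t ht => ?_
  have := isMaxOn_univ_iff.mp hmax (t • v)
  simp only [hg t ht, hQ t ht, hg.apply_eq_of_isMaxOn_sub_half hQ hmax] at this
  rw [Real.sq_sqrt (hg.nonneg_of_isMaxOn_sub_half hQ hmax)]
  nlinarith [sq_nonneg t]

theorem PosHomogeneous.apply_inv_sqrt_smul_of_isMaxOn_sub_half (hg : PosHomogeneous g 1)
    (hQ : PosHomogeneous Q 2) (hmax : IsMaxOn (fun v => g v - Q v / 2) univ w) (hw : 0 < Q w) :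
    g ((√(Q w))⁻¹ • w) = √(Q w) := by
  rw [hg _ (by positivity), hg.apply_eq_of_isMaxOn_sub_half hQ hmax, pow_one, ← div_eq_inv_mul,
    Real.div_sqrt]

theorem PosHomogeneous.apply_inv_sqrt_smul_self (hQ : PosHomogeneous Q 2) (hw : 0 < Q w) :
    Q ((√(Q w))⁻¹ • w) = 1 := by
  rw [hQ _ (by positivity), inv_pow, Real.sq_sqrt hw.le, inv_mul_cancel₀ hw.ne']

end MaxSubHalf

theorem Matrix.IsSymm.sub_dotProduct_mulVec_sub {n α : Type*} [Fintype n] [CommRing α]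
    {A : Matrix n n α} (hA : A.IsSymm) (x y : n → α) :
    (x - y) ⬝ᵥ A *ᵥ (x - y) = x ⬝ᵥ A *ᵥ x - 2 * (x ⬝ᵥ A *ᵥ y) + y ⬝ᵥ A *ᵥ y := by
  have hyx : y ⬝ᵥ A *ᵥ x = x ⬝ᵥ A *ᵥ y := by
    rw [← dotProduct_transpose_mulVec, hA.eq]
  simp only [mulVec_sub, sub_dotProduct, dotProduct_sub, hyx]
  ring

theorem posHomogeneous_dotProduct_mulVec_self {n : Type*} [Fintype n] (A : Matrix n n ℝ) :
    PosHomogeneous (fun v => v ⬝ᵥ A *ᵥ v) 2 := fun c _ x => by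
  simp only [mulVec_smul, smul_dotProduct, dotProduct_smul, smul_eq_mul]
  ring

theorem gpmf_coordinate_update_general {p : ℕ}
    (R : Matrix (Fin p) (Fin p) ℝ) (hR : R.PosSemidef)
    (lam : ℝ) (y : Fin p → ℝ)
    (P : (Fin p → ℝ) → ℝ)
    (hPhom : ∀ c : ℝ, 0 < c → ∀ x : Fin p → ℝ, P (c • x) = c * P x)
    (vhat : Fin p → ℝ)
    (hmin : ∀ v : Fin p → ℝ,
      (1 / 2) * ((y - vhat) ⬝ᵥ R.mulVec (y - vhat)) + lam * P vhat ≤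
        (1 / 2) * ((y - v) ⬝ᵥ R.mulVec (y - v)) + lam * P v) :
    (0 < vhat ⬝ᵥ R.mulVec vhat →
      ((Real.sqrt (vhat ⬝ᵥ R.mulVec vhat))⁻¹ • vhat) ⬝ᵥ
          R.mulVec ((Real.sqrt (vhat ⬝ᵥ R.mulVec vhat))⁻¹ • vhat) ≤ 1 ∧
      ∀ v : Fin p → ℝ, v ⬝ᵥ R.mulVec v ≤ 1 →
        y ⬝ᵥ R.mulVec v - lam * P v ≤
          y ⬝ᵥ R.mulVec ((Real.sqrt (vhat ⬝ᵥ R.mulVec vhat))⁻¹ • vhat) -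
            lam * P ((Real.sqrt (vhat ⬝ᵥ R.mulVec vhat))⁻¹ • vhat)) ∧
    (vhat = 0 →
      ∀ v : Fin p → ℝ, v ⬝ᵥ R.mulVec v ≤ 1 →
        y ⬝ᵥ R.mulVec v - lam * P v ≤
          y ⬝ᵥ R.mulVec (0 : Fin p → ℝ) - lam * P (0 : Fin p → ℝ)) := by
  have hsymm : R.IsSymm := isHermitian_iff_isSymm.mp hR.1
  have hg : PosHomogeneous (fun v => y ⬝ᵥ R *ᵥ v - lam * P v) 1 := fun c hc x => by
    simp only [mulVec_smul, dotProduct_smul, smul_eq_mul, hPhom c hc, pow_one]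
    ring
  have hQ := posHomogeneous_dotProduct_mulVec_self R
  have hmax : IsMaxOn (fun v => (y ⬝ᵥ R *ᵥ v - lam * P v) - v ⬝ᵥ R *ᵥ v / 2) univ vhat :=
    isMaxOn_univ_iff.mpr fun v => by
      have := hmin v
      rw [hsymm.sub_dotProduct_mulVec_sub, hsymm.sub_dotProduct_mulVec_sub] at this
      linarith
  refine ⟨fun hpos => ⟨?_, fun v hv => ?_⟩, fun h0 v hv => ?_⟩
  · exact (hQ.apply_inv_sqrt_smul_self hpos).le
  · rw [hg.apply_inv_sqrt_smul_of_isMaxOn_sub_half hQ hmax hpos]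
    exact hg.le_sqrt_of_isMaxOn_sub_half hQ hmax hv
  · subst h0
    have := hg.le_sqrt_of_isMaxOn_sub_half hQ hmax hv
    rwa [hQ.apply_zero two_ne_zero, Real.sqrt_zero, ← hg.apply_zero one_ne_zero] at this

/-- GPMF coordinate update (Theorem on the single-factor GPMF solution): if v̂
minimizes the penalized regression objective
f(v) = (1/2)(y − v)ᵀR(y − v) + λP(v) with P convex and homogeneous of order
one, then (i) if v̂ᵀRv̂ > 0, the rescaled vector v* = v̂/‖v̂‖_R lies in the set
{v : vᵀRv ≤ 1} and maximizes g(v) = yᵀRv − λP(v) over that set; and (ii) if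
v̂ = 0, then v* = 0 maximizes g over that set. -/
theorem gpmf_coordinate_update {p : ℕ}
    (R : Matrix (Fin p) (Fin p) ℝ) (hR : R.PosSemidef)
    (lam : ℝ) (hlam : 0 ≤ lam) (y : Fin p → ℝ)
    (P : (Fin p → ℝ) → ℝ)
    (hPconv : ConvexOn ℝ Set.univ P)
    (hPhom : ∀ c : ℝ, 0 < c → ∀ x : Fin p → ℝ, P (c • x) = c * P x)
    (vhat : Fin p → ℝ)
    (hmin : ∀ v : Fin p → ℝ,
      (1 / 2) * ((y - vhat) ⬝ᵥ R.mulVec (y - vhat)) + lam * P vhat ≤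
        (1 / 2) * ((y - v) ⬝ᵥ R.mulVec (y - v)) + lam * P v) :
    (0 < vhat ⬝ᵥ R.mulVec vhat →
      ((Real.sqrt (vhat ⬝ᵥ R.mulVec vhat))⁻¹ • vhat) ⬝ᵥ
          R.mulVec ((Real.sqrt (vhat ⬝ᵥ R.mulVec vhat))⁻¹ • vhat) ≤ 1 ∧
      ∀ v : Fin p → ℝ, v ⬝ᵥ R.mulVec v ≤ 1 →
        y ⬝ᵥ R.mulVec v - lam * P v ≤
          y ⬝ᵥ R.mulVec ((Real.sqrt (vhat ⬝ᵥ R.mulVec vhat))⁻¹ • vhat) -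
            lam * P ((Real.sqrt (vhat ⬝ᵥ R.mulVec vhat))⁻¹ • vhat)) ∧
    (vhat = 0 →
      ∀ v : Fin p → ℝ, v ⬝ᵥ R.mulVec v ≤ 1 →
        y ⬝ᵥ R.mulVec v - lam * P v ≤
          y ⬝ᵥ R.mulVec (0 : Fin p → ℝ) - lam * P (0 : Fin p → ℝ)) :=
  gpmf_coordinate_update_general R hR lam y P hPhom vhat hmin
end

section
/- Let R be a real p×p diagonal matrix with strictly positive diagonal entries R_jj > 0, let y ∈ ℝᵖ, and let λ ≥ 0. Then the vector v̂ ∈ ℝᵖ defined coordinatewise by v̂_j = S(y_j, λ / R_jj), where S is the soft-thresholding operator, minimizes the R-norm lasso objective f(v) := (1/2)·(y − v)ᵀ·R·(y − v) + λ·‖v‖₁ over v ∈ ℝᵖ. -/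
open Matrix

/-- The soft-thresholding operator S(x, t) = sign(x)·max(|x| − t, 0). -/
noncomputable def softThresh (x t : ℝ) : ℝ := Real.sign x * max (|x| - t) 0

lemma softThresh_key (t y v : ℝ) (ht : 0 ≤ t) :
    (1/2)*(y - softThresh y t)^2 + t*|softThresh y t| ≤ (1/2)*(y - v)^2 + t*|v| := by
  have hv2 := le_abs_self v
  have hv3 := neg_abs_le v
  unfold softThresh
  rcases lt_trichotomy y 0 with hy | hy | hy
  · rw [Real.sign_of_neg hy, abs_of_neg hy]
    rcases le_or_gt (-y) t with h | h
    · rw [max_eq_right (by linarith), mul_zero, abs_zero]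
      nlinarith [sq_nonneg v]
    · rw [max_eq_left (by linarith)]
      have : (-1 : ℝ) * (-y - t) = y + t := by ring
      rw [this, abs_of_neg (by linarith : y + t < 0)]
      nlinarith [sq_nonneg (y - v + t)]
  · subst hy
    simp only [Real.sign_zero, zero_mul, abs_zero, sub_zero, mul_zero]
    nlinarith [sq_nonneg v]
  · rw [Real.sign_of_pos hy, one_mul, abs_of_pos hy]
    rcases le_or_gt y t with h | h
    · rw [max_eq_right (by linarith), abs_zero]
      nlinarith [sq_nonneg v]
    · rw [max_eq_left (by linarith), abs_of_pos (by linarith : (0:ℝ) < y - t)]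
      nlinarith [sq_nonneg (y - v - t)]

/-- For a diagonal R with strictly positive diagonal entries, coordinatewise
soft thresholding v̂ⱼ = S(yⱼ, λ/Rⱼⱼ) minimizes the R-norm lasso objective
(1/2)(y − v)ᵀR(y − v) + λ‖v‖₁. -/
theorem rnorm_lasso_diagonal_solution {p : ℕ}
    (R : Matrix (Fin p) (Fin p) ℝ) (hRdiag : R.IsDiag)
    (hRpos : ∀ j, 0 < R j j)
    (y : Fin p → ℝ) (lam : ℝ) (hlam : 0 ≤ lam) :
    ∀ v : Fin p → ℝ,
      (1 / 2) * ((y - fun j => softThresh (y j) (lam / R j j)) ⬝ᵥ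
          R.mulVec (y - fun j => softThresh (y j) (lam / R j j))) +
        lam * ∑ j, |softThresh (y j) (lam / R j j)| ≤
      (1 / 2) * ((y - v) ⬝ᵥ R.mulVec (y - v)) + lam * ∑ j, |v j| := by
  intro v
  have hquad : ∀ w : Fin p → ℝ, w ⬝ᵥ R.mulVec w = ∑ j, R j j * (w j)^2 := by
    intro w
    unfold dotProduct mulVec dotProduct
    refine Finset.sum_congr rfl fun j _ => ?_
    have : ∑ k, R j k * w k = R j j * w j := by
      refine Finset.sum_eq_single j (fun k _ hk => ?_) (by simp)
      rw [hRdiag (Ne.symm hk), zero_mul]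
    rw [this]; ring
  rw [hquad, hquad, Finset.mul_sum, Finset.mul_sum, Finset.mul_sum, Finset.mul_sum,
    ← Finset.sum_add_distrib, ← Finset.sum_add_distrib]
  refine Finset.sum_le_sum fun j _ => ?_
  have hr := hRpos j
  have key := softThresh_key (lam / R j j) (y j) (v j) (div_nonneg hlam hr.le)
  have hmul := mul_le_mul_of_nonneg_left key hr.le
  have hlr : R j j * (lam / R j j) = lam := by field_simp
  simp only [Pi.sub_apply]
  calc (1/2) * (R j j * (y j - softThresh (y j) (lam / R j j))^2)
        + lam * |softThresh (y j) (lam / R j j)|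
      = R j j * ((1/2)*(y j - softThresh (y j) (lam / R j j))^2
          + (lam / R j j)*|softThresh (y j) (lam / R j j)|) := by
        field_simp
    _ ≤ R j j * ((1/2)*(y j - v j)^2 + (lam / R j j)*|v j|) := hmul
    _ = (1/2) * (R j j * (y j - v j)^2) + lam * |v j| := by
        field_simp
end

section
/- Let R be a real p×p positive semidefinite symmetric matrix with R_jj > 0 for a fixed index j, let y ∈ ℝᵖ, λ ≥ 0, and fix the coordinates v_i for i ≠ j. Then the function t ↦ (1/2)·(y − v(t))ᵀ·R·(y − v(t)) + λ·‖v(t)‖₁, where v(t) agrees with v in coordinates i ≠ j and has j-th coordinate t, is minimized over t ∈ ℝ at t* = (1/R_jj)·S( (R·y)_j − Σ_{i ≠ j} R_{ji}·v_i , λ ), where S is the soft-thresholding operator. (This is the coordinate-descent update for the R-norm lasso problem.) -/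
open Matrix

lemma scalar_min (a lam b : ℝ) (ha : 0 < a) (hlam : 0 ≤ lam) (t : ℝ) :
    a/2 * (a⁻¹ * softThresh b lam)^2 - b * (a⁻¹ * softThresh b lam)
      + lam * |a⁻¹ * softThresh b lam|
    ≤ a/2 * t^2 - b*t + lam*|t| := by
  rcases le_or_gt b lam with h | h
  · rcases le_or_gt (-lam) b with h2 | h2
    · -- |b| ≤ lam : t* = 0
      have hst : softThresh b lam = 0 := by
        have : |b| - lam ≤ 0 := by
          have := abs_le.2 ⟨h2, h⟩; linarith
        simp [softThresh, max_eq_right this]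
      rw [hst]
      have h1 : b * t ≤ lam * |t| := by
        calc b * t ≤ |b * t| := le_abs_self _
          _ = |b| * |t| := abs_mul _ _
          _ ≤ lam * |t| := mul_le_mul_of_nonneg_right (abs_le.2 ⟨h2, h⟩) (abs_nonneg t)
      simp only [mul_zero, abs_zero]
      nlinarith [mul_nonneg ha.le (sq_nonneg t)]
    · -- b < -lam
      have hb : b < 0 := lt_of_lt_of_le h2 (by linarith)
      have hst : softThresh b lam = b + lam := by
        simp only [softThresh, Real.sign_of_neg hb, abs_of_neg hb,
          max_eq_left (by linarith : (0:ℝ) ≤ -b - lam)]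
        ring
      have hts : a⁻¹ * (b + lam) ≤ 0 :=
        mul_nonpos_of_nonneg_of_nonpos (inv_pos.2 ha).le (by linarith)
      rw [hst, abs_of_nonpos hts]
      set s := a⁻¹ * (b + lam) with hs
      have has : a * s = b + lam := by rw [hs]; field_simp
      have h1 : lam * (-t) ≤ lam * |t| := mul_le_mul_of_nonneg_left (neg_le_abs t) hlam
      have key : a/2*t^2 - (b+lam)*t - (a/2*s^2 - (b+lam)*s) = a/2*(t-s)^2 := by
        rw [← has]; ring
      nlinarith [mul_nonneg ha.le (sq_nonneg (t-s))]
  · -- lam < b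
    have hb : 0 < b := lt_of_le_of_lt hlam h
    have hst : softThresh b lam = b - lam := by
      simp [softThresh, Real.sign_of_pos hb, abs_of_pos hb,
        max_eq_left (by linarith : (0:ℝ) ≤ b - lam)]
    have hts : 0 ≤ a⁻¹ * (b - lam) := mul_nonneg (inv_pos.2 ha).le (by linarith)
    rw [hst, abs_of_nonneg hts]
    set s := a⁻¹ * (b - lam) with hs
    have has : a * s = b - lam := by rw [hs]; field_simp
    have h1 : lam * t ≤ lam * |t| := mul_le_mul_of_nonneg_left (le_abs_self t) hlam
    have key : a/2*t^2 - (b-lam)*t - (a/2*s^2 - (b-lam)*s) = a/2*(t-s)^2 := by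
      rw [← has]; ring
    nlinarith [mul_nonneg ha.le (sq_nonneg (t-s))]

lemma quad_expand {p : ℕ} (R : Matrix (Fin p) (Fin p) ℝ) (hR : R.PosSemidef)
    (j : Fin p) (y v : Fin p → ℝ) (t : ℝ) :
    (y - Function.update v j t) ⬝ᵥ R.mulVec (y - Function.update v j t)
      = (y - Function.update v j 0) ⬝ᵥ R.mulVec (y - Function.update v j 0)
        - 2 * (R.mulVec y j - ∑ i ∈ Finset.univ.erase j, R j i * v i) * t
        + R j j * t^2 := by
  have hRT : Rᵀ = R := by
    ext i k
    simpa using congrFun (congrFun hR.1 i) k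
  set d : Fin p → ℝ := Pi.single j 1 with hd
  have hupd : y - Function.update v j t = (y - Function.update v j 0) - t • d := by
    funext i
    by_cases h : i = j
    · subst h; simp [hd]
    · simp [hd, Function.update_of_ne h, Pi.single_eq_of_ne h]
  set w := y - Function.update v j 0 with hw
  have hsym : ∀ x : Fin p → ℝ, x ⬝ᵥ R.mulVec d = d ⬝ᵥ R.mulVec x := by
    intro x
    rw [dotProduct_mulVec, ← hRT, vecMul_transpose, hRT, dotProduct_comm]
  have hdot : ∀ x : Fin p → ℝ, d ⬝ᵥ x = x j := by
    intro x
    simp [hd, dotProduct, Pi.single_apply]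
  have hRdj : d ⬝ᵥ R.mulVec d = R j j := by
    rw [hdot]
    simp [mulVec, dotProduct, hd, Pi.single_apply, mul_comm]
  have hwj : (R.mulVec w) j = R.mulVec y j - ∑ i ∈ Finset.univ.erase j, R j i * v i := by
    rw [hw]
    have : R.mulVec (y - Function.update v j 0) = R.mulVec y - R.mulVec (Function.update v j 0) := by
      rw [mulVec_sub]
    rw [this]
    simp only [Pi.sub_apply, mulVec, dotProduct]
    congr 1
    rw [← Finset.add_sum_erase _ _ (Finset.mem_univ j)]
    rw [Function.update_self]
    rw [mul_zero, zero_add]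
    apply Finset.sum_congr rfl
    intro i hi
    rw [Function.update_of_ne (Finset.ne_of_mem_erase hi)]
  simp only [hupd, mulVec_sub, mulVec_smul, sub_dotProduct, dotProduct_sub,
    smul_dotProduct, dotProduct_smul, smul_eq_mul]
  rw [hsym w, hRdj, hdot (R.mulVec w), hwj]
  ring

/-- Coordinate-descent update for the R-norm lasso: with coordinates vᵢ (i ≠ j)
fixed, the function t ↦ (1/2)(y − v(t))ᵀR(y − v(t)) + λ‖v(t)‖₁ (where v(t)
agrees with v off j and has j-th coordinate t) is minimized at
t* = (1/Rⱼⱼ)·S((R·y)ⱼ − Σ_{i≠j} Rⱼᵢ·vᵢ, λ). -/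
theorem rnorm_lasso_coordinate_update {p : ℕ}
    (R : Matrix (Fin p) (Fin p) ℝ) (hR : R.PosSemidef)
    (j : Fin p) (hRjj : 0 < R j j)
    (y v : Fin p → ℝ) (lam : ℝ) (hlam : 0 ≤ lam) :
    ∀ t : ℝ,
      (1 / 2) * ((y - Function.update v j
            ((R j j)⁻¹ * softThresh (R.mulVec y j -
              ∑ i ∈ Finset.univ.erase j, R j i * v i) lam)) ⬝ᵥ
          R.mulVec (y - Function.update v j
            ((R j j)⁻¹ * softThresh (R.mulVec y j -
              ∑ i ∈ Finset.univ.erase j, R j i * v i) lam))) +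
        lam * ∑ i, |Function.update v j
            ((R j j)⁻¹ * softThresh (R.mulVec y j -
              ∑ i ∈ Finset.univ.erase j, R j i * v i) lam) i| ≤
      (1 / 2) * ((y - Function.update v j t) ⬝ᵥ
          R.mulVec (y - Function.update v j t)) +
        lam * ∑ i, |Function.update v j t i| := by
  intro t
  set b := R.mulVec y j - ∑ i ∈ Finset.univ.erase j, R j i * v i with hb
  set ts := (R j j)⁻¹ * softThresh b lam with hts
  have l1 : ∀ s : ℝ, ∑ i, |Function.update v j s i|
      = |s| + ∑ i ∈ Finset.univ.erase j, |v i| := by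
    intro s
    have hfe : (fun i => |Function.update v j s i|)
        = Function.update (fun i => |v i|) j |s| := by
      funext i
      by_cases h : i = j
      · subst h; simp
      · simp [Function.update_of_ne h]
    rw [hfe]
    rw [← Finset.add_sum_erase _ _ (Finset.mem_univ j), Function.update_self]
    congr 1
    exact Finset.sum_congr rfl fun i hi =>
      Function.update_of_ne (Finset.ne_of_mem_erase hi) _ _
  have hq := fun s => quad_expand R hR j y v s
  rw [hq ts, hq t, l1 ts, l1 t]
  have hs := scalar_min (R j j) lam b hRjj hlam t
  rw [hts]
  nlinarith [hs]
end

section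
/- Let U be a real n×k matrix and V a real p×k matrix such that Uᵀ·Q·U and Vᵀ·R·V are invertible. Define the projections P^(U) := U·(Uᵀ·Q·U)⁻¹·Uᵀ and P^(V) := V·(Vᵀ·R·V)⁻¹·Vᵀ, and set X_k := P^(U)·Q·X·R·P^(V). Define Ũ := Q̃ᵀ·U, Ṽ := R̃ᵀ·V, and X̃_k := Ũ·(Ũᵀ·Ũ)⁻¹·Ũᵀ·X̃·Ṽ·(Ṽᵀ·Ṽ)⁻¹·Ṽᵀ. Then Q̃ᵀ·X_k·R̃ = X̃_k and trace(Q·X_k·R·X_kᵀ) = trace(X̃_k·X̃_kᵀ). Consequently, the cumulative proportion of variance explained by the first k regularized generalized principal components, trace(Q·X_k·R·X_kᵀ) / trace(Q·X·R·Xᵀ), equals trace(X̃_k·X̃_kᵀ) / trace(X̃·X̃ᵀ). -/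
open Matrix

lemma trace_key {n p l m : ℕ} (Qt : Matrix (Fin n) (Fin l) ℝ)
    (M : Matrix (Fin n) (Fin p) ℝ) (Rt : Matrix (Fin p) (Fin m) ℝ) :
    ((Qt * Qtᵀ) * M * (Rt * Rtᵀ) * Mᵀ).trace = ((Qtᵀ * M * Rt) * (Qtᵀ * M * Rt)ᵀ).trace := by
  rw [show (Qt * Qtᵀ) * M * (Rt * Rtᵀ) * Mᵀ = Qt * (Qtᵀ * M * Rt * Rtᵀ * Mᵀ) by
    simp [Matrix.mul_assoc], Matrix.trace_mul_comm]
  simp [Matrix.transpose_mul, Matrix.mul_assoc]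

/-- Cumulative variance explained by regularized GPCs: with projections
P⁽ᵁ⁾ = U(UᵀQU)⁻¹Uᵀ, P⁽ⱽ⁾ = V(VᵀRV)⁻¹Vᵀ, X_k = P⁽ᵁ⁾·Q·X·R·P⁽ⱽ⁾, and with
Ũ = Q̃ᵀU, Ṽ = R̃ᵀV, X̃ = Q̃ᵀXR̃, X̃_k = Ũ(ŨᵀŨ)⁻¹ŨᵀX̃Ṽ(ṼᵀṼ)⁻¹Ṽᵀ, we have
Q̃ᵀ·X_k·R̃ = X̃_k and trace(Q·X_k·R·X_kᵀ) = trace(X̃_k·X̃_kᵀ); consequently the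
cumulative proportion of variance explained satisfies
trace(Q·X_k·R·X_kᵀ)/trace(Q·X·R·Xᵀ) = trace(X̃_k·X̃_kᵀ)/trace(X̃·X̃ᵀ). -/
theorem gpmf_cumulative_variance_explained {n p l m k : ℕ}
    (X : Matrix (Fin n) (Fin p) ℝ)
    (Q : Matrix (Fin n) (Fin n) ℝ) (R : Matrix (Fin p) (Fin p) ℝ)
    (Qt : Matrix (Fin n) (Fin l) ℝ) (Rt : Matrix (Fin p) (Fin m) ℝ)
    (hQ : Q = Qt * Qtᵀ) (hR : R = Rt * Rtᵀ)
    (U : Matrix (Fin n) (Fin k) ℝ) (V : Matrix (Fin p) (Fin k) ℝ)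
    (hU : IsUnit (Uᵀ * Q * U)) (hV : IsUnit (Vᵀ * R * V)) :
    Qtᵀ * (U * (Uᵀ * Q * U)⁻¹ * Uᵀ * Q * X * R * (V * (Vᵀ * R * V)⁻¹ * Vᵀ)) * Rt =
      (Qtᵀ * U) * ((Qtᵀ * U)ᵀ * (Qtᵀ * U))⁻¹ * (Qtᵀ * U)ᵀ * (Qtᵀ * X * Rt) *
        (Rtᵀ * V) * ((Rtᵀ * V)ᵀ * (Rtᵀ * V))⁻¹ * (Rtᵀ * V)ᵀ ∧
    (Q * (U * (Uᵀ * Q * U)⁻¹ * Uᵀ * Q * X * R * (V * (Vᵀ * R * V)⁻¹ * Vᵀ)) * R *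
        (U * (Uᵀ * Q * U)⁻¹ * Uᵀ * Q * X * R * (V * (Vᵀ * R * V)⁻¹ * Vᵀ))ᵀ).trace =
      (((Qtᵀ * U) * ((Qtᵀ * U)ᵀ * (Qtᵀ * U))⁻¹ * (Qtᵀ * U)ᵀ * (Qtᵀ * X * Rt) *
          (Rtᵀ * V) * ((Rtᵀ * V)ᵀ * (Rtᵀ * V))⁻¹ * (Rtᵀ * V)ᵀ) *
        ((Qtᵀ * U) * ((Qtᵀ * U)ᵀ * (Qtᵀ * U))⁻¹ * (Qtᵀ * U)ᵀ * (Qtᵀ * X * Rt) *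
          (Rtᵀ * V) * ((Rtᵀ * V)ᵀ * (Rtᵀ * V))⁻¹ * (Rtᵀ * V)ᵀ)ᵀ).trace ∧
    (Q * (U * (Uᵀ * Q * U)⁻¹ * Uᵀ * Q * X * R * (V * (Vᵀ * R * V)⁻¹ * Vᵀ)) * R *
        (U * (Uᵀ * Q * U)⁻¹ * Uᵀ * Q * X * R * (V * (Vᵀ * R * V)⁻¹ * Vᵀ))ᵀ).trace /
        (Q * X * R * Xᵀ).trace =
      (((Qtᵀ * U) * ((Qtᵀ * U)ᵀ * (Qtᵀ * U))⁻¹ * (Qtᵀ * U)ᵀ * (Qtᵀ * X * Rt) *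
          (Rtᵀ * V) * ((Rtᵀ * V)ᵀ * (Rtᵀ * V))⁻¹ * (Rtᵀ * V)ᵀ) *
        ((Qtᵀ * U) * ((Qtᵀ * U)ᵀ * (Qtᵀ * U))⁻¹ * (Qtᵀ * U)ᵀ * (Qtᵀ * X * Rt) *
          (Rtᵀ * V) * ((Rtᵀ * V)ᵀ * (Rtᵀ * V))⁻¹ * (Rtᵀ * V)ᵀ)ᵀ).trace /
        ((Qtᵀ * X * Rt) * (Qtᵀ * X * Rt)ᵀ).trace := by
  subst hQ hR
  have h1 : Qtᵀ * (U * (Uᵀ * (Qt * Qtᵀ) * U)⁻¹ * Uᵀ * (Qt * Qtᵀ) * X * (Rt * Rtᵀ) *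
        (V * (Vᵀ * (Rt * Rtᵀ) * V)⁻¹ * Vᵀ)) * Rt =
      (Qtᵀ * U) * ((Qtᵀ * U)ᵀ * (Qtᵀ * U))⁻¹ * (Qtᵀ * U)ᵀ * (Qtᵀ * X * Rt) *
        (Rtᵀ * V) * ((Rtᵀ * V)ᵀ * (Rtᵀ * V))⁻¹ * (Rtᵀ * V)ᵀ := by
    simp [Matrix.transpose_mul, Matrix.mul_assoc]
  refine ⟨h1, ?_, ?_⟩ <;> rw [trace_key, h1]
  rw [trace_key Qt X Rt]
end
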